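/- Let G be a graph whose vertex set is partitioned into clusters C_1,…,C_k, and let D be the set of vertices that have a neighbor in a different cluster. Suppose |D| ≤ ε·|V(G)|. If for each i, I_i is a maximum independent set of G[C_i], then removing from I = ⋃I_i all vertices of D that have a neighbor in I yields an independent set of G of size at least α(G) − ε·|V(G)|, where α(G) is the maximum size of an independent set of G. -/

import Mathlib

/-- `S` is an independent set of `G`. -/
def SimpleGraph.IsIndep {V : Type*} (G : SimpleGraph V) (S : Set V) : Prop :=
  ∀ u ∈ S, ∀ v ∈ S, ¬ G.Adj u v

/-! Within a single cluster the sets `I i` are independent, so an edge inside `⋃ i, I i` must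
cross between clusters; deleting the endpoints in `D` adjacent to `⋃ i, I i` removes all such
edges at a cost of at most `|D|` vertices. On the other hand any independent set `J` splits into
its cluster parts `J ∩ C_i`, each independent in `G[C_i]` and hence no larger than `I i`, so
`|J| ≤ |⋃ i, I i|`. -/

lemma Set.ncard_eq_sum_ncard_inter_fiber {α ι : Type*} [Finite α] [Fintype ι] (c : α → ι)
    (S : Set α) : S.ncard = ∑ i, (S ∩ {a | c a = i}).ncard := by
  have hS : S = ⋃ i, S ∩ {a | c a = i} := by
    ext a
    simp
  have hdisj : Pairwise fun i j ↦ Disjoint (S ∩ {a | c a = i}) (S ∩ {a | c a = j}) :=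
    fun i j hij ↦ Set.disjoint_left.mpr fun a hi hj ↦ hij (hi.2.symm.trans hj.2)
  conv_lhs => rw [hS]
  rw [Set.ncard_iUnion_of_finite (fun _ ↦ Set.toFinite _) hdisj, finsum_eq_sum_of_fintype]

namespace SimpleGraph

variable {V ι : Type*} {G : SimpleGraph V} {c : V → ι} {I : ι → Set V}

lemma IsIndep.mono {S T : Set V} (hT : G.IsIndep T) (hST : S ⊆ T) : G.IsIndep S :=
  fun u hu v hv ↦ hT u (hST hu) v (hST hv)

lemma iUnion_inter_fiber_eq (hsub : ∀ i, I i ⊆ {v | c v = i}) (i : ι) :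
    (⋃ j, I j) ∩ {v | c v = i} = I i := by
  ext v
  simp only [Set.mem_inter_iff, Set.mem_iUnion, Set.mem_ofPred_eq]
  constructor
  · rintro ⟨⟨j, hvj⟩, rfl⟩
    rwa [← hsub j hvj] at hvj
  · exact fun hvi ↦ ⟨⟨i, hvi⟩, hsub i hvi⟩

lemma cluster_ne_of_adj_of_mem_iUnion (hsub : ∀ i, I i ⊆ {v | c v = i})
    (hind : ∀ i, G.IsIndep (I i)) {u v : V} (hu : u ∈ ⋃ i, I i) (hv : v ∈ ⋃ i, I i)
    (hadj : G.Adj u v) : c u ≠ c v := by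
  obtain ⟨i, hui⟩ := Set.mem_iUnion.mp hu
  obtain ⟨j, hvj⟩ := Set.mem_iUnion.mp hv
  intro hc
  obtain rfl : i = j := (hsub i hui).symm.trans (hc.trans (hsub j hvj))
  exact hind i u hui v hvj hadj

lemma isIndep_sdiff_crossing {U : Set V} (hU : ∀ u ∈ U, ∀ v ∈ U, G.Adj u v → c u ≠ c v) :
    G.IsIndep (U \ {v | (∃ u, G.Adj v u ∧ c u ≠ c v) ∧ ∃ u ∈ U, G.Adj v u}) := by
  rintro u ⟨huU, huB⟩ v ⟨hvU, -⟩ hadj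
  exact huB ⟨⟨v, hadj, (hU u huU v hvU hadj).symm⟩, v, hvU, hadj⟩

lemma ncard_le_ncard_iUnion [Finite V] [Fintype ι] (hsub : ∀ i, I i ⊆ {v | c v = i})
    (hmax : ∀ i, ∀ J : Set V, J ⊆ {v | c v = i} → G.IsIndep J → J.ncard ≤ (I i).ncard)
    {J : Set V} (hJ : G.IsIndep J) : J.ncard ≤ (⋃ i, I i).ncard := by
  rw [Set.ncard_eq_sum_ncard_inter_fiber c J, Set.ncard_eq_sum_ncard_inter_fiber c (⋃ i, I i)]
  refine Finset.sum_le_sum fun i _ ↦ ?_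
  rw [iUnion_inter_fiber_eq hsub]
  exact hmax i _ Set.inter_subset_right (hJ.mono Set.inter_subset_left)

end SimpleGraph

open SimpleGraph in
theorem cluster_approximation_general {V : Type*} [Fintype V] {k : ℕ} (G : SimpleGraph V)
    (c : V → Fin k) (ε : ℝ)
    (hD : (({v | ∃ u, G.Adj v u ∧ c u ≠ c v}).ncard : ℝ) ≤ ε * Fintype.card V)
    (I : Fin k → Set V)
    (hsub : ∀ i, I i ⊆ {v | c v = i})
    (hind : ∀ i, G.IsIndep (I i))
    (hmax : ∀ i, ∀ J : Set V, J ⊆ {v | c v = i} → G.IsIndep J → J.ncard ≤ (I i).ncard) :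
    G.IsIndep ((⋃ i, I i) \ {v | (∃ u, G.Adj v u ∧ c u ≠ c v) ∧ ∃ u ∈ ⋃ i, I i, G.Adj v u}) ∧
    ∀ J : Set V, G.IsIndep J →
      (J.ncard : ℝ) - ε * Fintype.card V ≤
        (((⋃ i, I i) \
          {v | (∃ u, G.Adj v u ∧ c u ≠ c v) ∧ ∃ u ∈ ⋃ i, I i, G.Adj v u}).ncard : ℝ) := by
  set U := ⋃ i, I i
  set D : Set V := {v | ∃ u, G.Adj v u ∧ c u ≠ c v}
  set B : Set V := {v | (∃ u, G.Adj v u ∧ c u ≠ c v) ∧ ∃ u ∈ U, G.Adj v u}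
  refine ⟨isIndep_sdiff_crossing fun u hu v hv ↦ cluster_ne_of_adj_of_mem_iUnion hsub hind hu hv,
    fun J hJ ↦ ?_⟩
  have hJU : J.ncard ≤ U.ncard := ncard_le_ncard_iUnion hsub hmax hJ
  have hUB : U.ncard ≤ (U \ B).ncard + B.ncard := Set.ncard_le_ncard_sdiff_add_ncard U B
  have hBD : B.ncard ≤ D.ncard := Set.ncard_le_ncard fun v hv ↦ hv.1
  have : (J.ncard : ℝ) ≤ (U \ B).ncard + D.ncard := by exact_mod_cast by omega
  linarith

/-- Vertex set partitioned into clusters via the cluster map `c`; `D` is the set of vertices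
with a neighbor in a different cluster and `|D| ≤ ε·|V|`. If `I i` is a maximum independent
set of the subgraph induced by cluster `i`, then removing from `I = ⋃ I i` all vertices of `D`
having a neighbor in `I` yields an independent set of `G` of size at least `α(G) - ε·|V|`. -/
theorem cluster_approximation {V : Type*} [Fintype V] {k : ℕ} (G : SimpleGraph V)
    (c : V → Fin k) (ε : ℝ) (hε : 0 < ε)
    (hD : (({v | ∃ u, G.Adj v u ∧ c u ≠ c v}).ncard : ℝ) ≤ ε * Fintype.card V)
    (I : Fin k → Set V)
    (hsub : ∀ i, I i ⊆ {v | c v = i})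
    (hind : ∀ i, G.IsIndep (I i))
    (hmax : ∀ i, ∀ J : Set V, J ⊆ {v | c v = i} → G.IsIndep J → J.ncard ≤ (I i).ncard) :
    G.IsIndep ((⋃ i, I i) \ {v | (∃ u, G.Adj v u ∧ c u ≠ c v) ∧ ∃ u ∈ ⋃ i, I i, G.Adj v u}) ∧
    ∀ J : Set V, G.IsIndep J →
      (J.ncard : ℝ) - ε * Fintype.card V ≤
        (((⋃ i, I i) \
          {v | (∃ u, G.Adj v u ∧ c u ≠ c v) ∧ ∃ u ∈ ⋃ i, I i, G.Adj v u}).ncard : ℝ) :=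
  cluster_approximation_general G c ε hD I hsub hind hmax
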